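/- Let u : ℝ^d → ℝ, l ∈ ℝ^d, h > 0. Then pointwise |Δ_{h,l} u| ≤ |δ_{h,−l}((δ_{h,l} u)₋)| + |δ_{h,l}((δ_{h,−l} u)₋)|, where Δ_{h,l} u = −δ_{h,l} δ_{h,−l} u and w₋ denotes the pointwise negative part of w. -/

import Mathlib

/-- Discrete first difference operator δ_{h,l} u(x) = (u(x + h·l) − u(x))/h. -/
noncomputable def fdDelta {d : ℕ} (h : ℝ) (l : Fin d → ℝ) (u : (Fin d → ℝ) → ℝ) :
    (Fin d → ℝ) → ℝ :=
  fun x => (u (x + h • l) - u x) / h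

/-- Discrete second difference operator Δ_{h,l} u = −δ_{h,l} δ_{h,−l} u. -/
noncomputable def fdDelta2 {d : ℕ} (h : ℝ) (l : Fin d → ℝ) (u : (Fin d → ℝ) → ℝ) :
    (Fin d → ℝ) → ℝ :=
  fun x => -(fdDelta h l (fdDelta h (-l) u) x)

/-!
Write `a = δ_{h,l} u(x)` and `b = δ_{h,−l} u(x)`. Then `Δ_{h,l} u(x) = (a + b)/h`, while the two
terms on the right are `(b⁺ − a⁻)/h` and `(a⁺ − b⁻)/h`, because `δ_{h,−l} u(x + h·l) = −a` and
`δ_{h,l} u(x − h·l) = −b`. Since `a⁺ − a⁻ = a` and `b⁺ − b⁻ = b`, these two terms add up to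
`Δ_{h,l} u(x)`, and the triangle inequality concludes.
-/

theorem abs_add_le_abs_max_sub_max_add_abs_max_sub_max {α : Type*} [AddCommGroup α]
    [LinearOrder α] [IsOrderedAddMonoid α] (a b : α) :
    |a + b| ≤ |max b 0 - max (-a) 0| + |max a 0 - max (-b) 0| :=
  calc |a + b| = |(max a 0 - max (-a) 0) + (max b 0 - max (-b) 0)| := by
        rw [max_zero_sub_max_neg_zero_eq_self a, max_zero_sub_max_neg_zero_eq_self b]
    _ = |(max b 0 - max (-a) 0) + (max a 0 - max (-b) 0)| := by congr 1; abel
    _ ≤ _ := abs_add_le _ _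

section FiniteDifferences

variable {d : ℕ} (h : ℝ) (l : Fin d → ℝ) (u : (Fin d → ℝ) → ℝ) (x : Fin d → ℝ)

theorem fdDelta_neg_apply_add_smul :
    fdDelta h (-l) u (x + h • l) = -fdDelta h l u x := by
  simp only [fdDelta, smul_neg, add_neg_cancel_right, ← neg_div, neg_sub]

theorem fdDelta2_apply :
    fdDelta2 h l u x = (fdDelta h l u x + fdDelta h (-l) u x) / h := by
  rw [fdDelta2, fdDelta, fdDelta_neg_apply_add_smul]
  ring

theorem fdDelta_neg_negPart_fdDelta :
    fdDelta h (-l) (fun y => max (-(fdDelta h l u y)) 0) x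
      = (max (fdDelta h (-l) u x) 0 - max (-fdDelta h l u x) 0) / h := by
  have hshift := fdDelta_neg_apply_add_smul h (-l) u x
  rw [neg_neg] at hshift
  rw [fdDelta, hshift, neg_neg]

end FiniteDifferences

theorem abs_second_diff_le_neg_parts_general {d : ℕ}
    (u : (Fin d → ℝ) → ℝ) (l : Fin d → ℝ) (h : ℝ)
    (x : Fin d → ℝ) :
    |fdDelta2 h l u x|
      ≤ |fdDelta h (-l) (fun y => max (-(fdDelta h l u y)) 0) x|
        + |fdDelta h l (fun y => max (-(fdDelta h (-l) u y)) 0) x| := by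
  have hsecond := fdDelta_neg_negPart_fdDelta h (-l) u x
  rw [neg_neg] at hsecond
  rw [fdDelta2_apply, fdDelta_neg_negPart_fdDelta, hsecond, abs_div, abs_div, abs_div,
    ← add_div]
  exact div_le_div_of_nonneg_right (abs_add_le_abs_max_sub_max_add_abs_max_sub_max _ _)
    (abs_nonneg h)

theorem abs_second_diff_le_neg_parts {d : ℕ}
    (u : (Fin d → ℝ) → ℝ) (l : Fin d → ℝ) (h : ℝ) (hh : 0 < h)
    (x : Fin d → ℝ) :
    |fdDelta2 h l u x|
      ≤ |fdDelta h (-l) (fun y => max (-(fdDelta h l u y)) 0) x|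
        + |fdDelta h l (fun y => max (-(fdDelta h (-l) u y)) 0) x| :=
  abs_second_diff_le_neg_parts_general u l h x
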